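/- Let V₊ ⊆ 𝔡 be a generalized metric, V₋ := V₊^⊥, and write x = x₊ + x₋ for the induced decomposition of x ∈ 𝔡. Then there is a unique connection ∇ on 𝔡 satisfying ⟨∇ₓy, z⟩ = (1/3)·⟨[x₊,y₊], z₊⟩ + (1/3)·⟨[x₋,y₋], z₋⟩ + ⟨[x₊,y₋], z₋⟩ + ⟨[x₋,y₊], z₊⟩ for all x,y,z ∈ 𝔡, and this ∇ is Levi-Civita with respect to V₊ with vanishing divergence: it preserves the splitting (∇ₓ(V₊) ⊆ V₊ and ∇ₓ(V₋) ⊆ V₋ for all x ∈ 𝔡), it is torsion-free (T_∇ = 0), and Div_∇(y) = 0 for all y ∈ 𝔡. -/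

import Mathlib

/-!
Positive definiteness gives `𝔡 = V₊ ⊕ V₊^⊥`; let `P` be the projection onto `V₊` along `V₊^⊥`,
which is `B`-self-adjoint, so that `x₊ = P x` and `x₋ = (1 - P) x`. The right-hand side of the
defining formula is then a trilinear form `F(x, y, z)`, and nondegeneracy of `B` produces a unique
`∇` with `⟨∇ₓy, z⟩ = F(x, y, z)`. Since `⟨[x, y], z⟩` is alternating, `F` is skew in `(y, z)`, so
`∇` is metric, and `F(x, y, z) - F(y, x, z) + F(z, x, y)` reassembles the eight `±`-components of
`⟨[x, y], z⟩`, which is torsion-freeness. `F` vanishes as soon as `y` and `z` lie in opposite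
summands, so `∇` preserves the splitting. For the divergence,
`tr L = tr (P L P) + tr ((1 - P) L (1 - P))` for `L = (x ↦ ∇ₓy)`, and both compressions are
`B`-skew, e.g. `⟨P ∇_{P u} y, w⟩ = ⅓ ⟨[P u, P y], P w⟩`, hence traceless. Everything about `V₋`
follows from the statement about `V₊`, as `F` is invariant under `P ↦ 1 - P`.
-/

/-- A subspace on which the bilinear form is positive definite. -/
def IsPosDefOn {E : Type*} [AddCommGroup E] [Module ℝ E]
    (B : E →ₗ[ℝ] E →ₗ[ℝ] ℝ) (V : Submodule ℝ E) : Prop :=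
  ∀ x ∈ V, x ≠ 0 → 0 < B x x

/-- A generalized metric: a maximal positive-definite subspace. -/
def IsGenMetric {E : Type*} [AddCommGroup E] [Module ℝ E]
    (B : E →ₗ[ℝ] E →ₗ[ℝ] ℝ) (V : Submodule ℝ E) : Prop :=
  IsPosDefOn B V ∧ ∀ W : Submodule ℝ E, V ≤ W → IsPosDefOn B W → W = V

/-- A (metric) connection on a quadratic Lie algebra: a bilinear map `∇` with
`⟨∇ₓy,z⟩ + ⟨y,∇ₓz⟩ = 0`. -/
def IsConnection {𝔡 : Type*} [LieRing 𝔡] [LieAlgebra ℝ 𝔡]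
    (B : 𝔡 →ₗ[ℝ] 𝔡 →ₗ[ℝ] ℝ) (D : 𝔡 →ₗ[ℝ] 𝔡 →ₗ[ℝ] 𝔡) : Prop :=
  ∀ x y z : 𝔡, B (D x y) z + B y (D x z) = 0

theorem LinearMap.BilinForm.trace_eq_zero_of_isSkewAdjoint {K E : Type*} [Field K] [CharZero K]
    [AddCommGroup E] [Module K E] [FiniteDimensional K E] {B : LinearMap.BilinForm K E}
    (hB : B.Nondegenerate) {f : Module.End K E} (hf : LinearMap.IsSkewAdjoint B f) :
    LinearMap.trace K E f = 0 := by
  have hconj : (B.toDual hB).conj (-f) = Module.Dual.transpose (R := K) f := by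
    ext φ z
    simpa [LinearEquiv.conj_apply, LinearMap.BilinForm.toDual_def, Module.Dual.transpose_apply,
      neg_eq_iff_eq_neg] using hf ((B.toDual hB).symm φ) z
  have := LinearMap.trace_conj' (-f) (B.toDual hB)
  rw [hconj, LinearMap.trace_transpose', map_neg] at this
  exact self_eq_neg.mp this

theorem LinearMap.trace_eq_add_of_isIdempotentElem {R M : Type*} [CommRing R] [AddCommGroup M]
    [Module R M] [Module.Free R M] [Module.Finite R M] {p : Module.End R M}
    (hp : IsIdempotentElem p) (f : Module.End R M) :
    trace R M f = trace R M (p * f * p) + trace R M ((1 - p) * f * (1 - p)) := by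
  have compress : ∀ q : Module.End R M, IsIdempotentElem q →
      trace R M (q * f * q) = trace R M (f * q) := fun q hq => by
    rw [mul_assoc, trace_mul_comm, mul_assoc, hq.eq]
  rw [compress p hp, compress _ hp.one_sub, ← map_add, ← mul_add, add_sub_cancel, mul_one]

theorem IsPosDefOn.isCompl_orthogonal {E : Type*} [AddCommGroup E] [Module ℝ E]
    [FiniteDimensional ℝ E] {B : LinearMap.BilinForm ℝ E} {V : Submodule ℝ E}
    (hV : IsPosDefOn B V) (hB : B.IsRefl) : IsCompl V (B.orthogonal V) := by
  refine (LinearMap.BilinForm.isCompl_orthogonal_iff_disjoint hB).2 ?_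
  refine Submodule.disjoint_def.2 fun x hxV hxW => ?_
  by_contra hx
  exact (hV x hxV hx).ne' (hxW x hxV)

theorem LinearMap.BilinForm.isSelfAdjoint_projection_orthogonal {R E : Type*} [CommRing R]
    [AddCommGroup E] [Module R E] {B : LinearMap.BilinForm R E} (hB : B.IsRefl)
    {V : Submodule R E} (hc : IsCompl V (B.orthogonal V)) :
    LinearMap.IsSelfAdjoint B (V.projection _ hc) := by
  intro x y
  set P := V.projection _ hc
  have hleft : B (P x) (y - P y) = 0 :=
    Submodule.sub_projection_mem hc y (P x) (Submodule.projection_apply_mem hc x)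
  have hright : B (x - P x) (P y) = 0 :=
    hB _ _ (Submodule.sub_projection_mem hc x (P y) (Submodule.projection_apply_mem hc y))
  rw [map_sub] at hleft
  rw [map_sub, LinearMap.sub_apply] at hright
  linear_combination hleft - hright

section LieForm

variable {R L : Type*} [CommRing R] [LieRing L] [LieAlgebra R L] {B : LinearMap.BilinForm R L}

theorem lie_form_swap_left (x y z : L) : B ⁅y, x⁆ z = -B ⁅x, y⁆ z := by
  rw [← lie_skew, map_neg, LinearMap.neg_apply]

theorem lie_form_swap_right (hinv : ∀ x y z : L, B ⁅x, y⁆ z = B x ⁅y, z⁆) (x y z : L) :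
    B ⁅x, z⁆ y = -B ⁅x, y⁆ z := by
  rw [hinv, hinv, ← lie_skew, map_neg]

theorem lie_form_swap_outer (hsymm : ∀ x y : L, B x y = B y x)
    (hinv : ∀ x y z : L, B ⁅x, y⁆ z = B x ⁅y, z⁆) (x y z : L) : B ⁅z, y⁆ x = -B ⁅x, y⁆ z := by
  rw [hinv, hsymm, lie_form_swap_left]

theorem lie_form_cycle (hinv : ∀ x y z : L, B ⁅x, y⁆ z = B x ⁅y, z⁆) (x y z : L) :
    B ⁅z, x⁆ y = B ⁅x, y⁆ z := by
  rw [lie_form_swap_left, lie_form_swap_right hinv, neg_neg]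

end LieForm

section CanonicalConnection

variable {𝔡 : Type*} [LieRing 𝔡] [LieAlgebra ℝ 𝔡] {B : LinearMap.BilinForm ℝ 𝔡}

variable (B) in
/-- `⟨∇ₓy, z⟩` for the canonical connection, with `P x` and `(1 - P) x` in the roles of `x₊`
and `x₋`. -/
noncomputable def canonicalForm (P : Module.End ℝ 𝔡) : 𝔡 →ₗ[ℝ] 𝔡 →ₗ[ℝ] 𝔡 →ₗ[ℝ] ℝ :=
  let term (X Y Z : Module.End ℝ 𝔡) : 𝔡 →ₗ[ℝ] 𝔡 →ₗ[ℝ] 𝔡 →ₗ[ℝ] ℝ :=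
    ((LieModule.toEnd ℝ 𝔡 𝔡 : 𝔡 →ₗ[ℝ] 𝔡 →ₗ[ℝ] 𝔡).compl₁₂ X Y).compr₂ (B.compl₂ Z)
  (3 : ℝ)⁻¹ • term P P P + (3 : ℝ)⁻¹ • term (1 - P) (1 - P) (1 - P)
    + term P (1 - P) (1 - P) + term (1 - P) P P

theorem canonicalForm_apply (P : Module.End ℝ 𝔡) (x y z : 𝔡) :
    canonicalForm B P x y z = (3 : ℝ)⁻¹ * B ⁅P x, P y⁆ (P z)
      + (3 : ℝ)⁻¹ * B ⁅(1 - P) x, (1 - P) y⁆ ((1 - P) z)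
      + B ⁅P x, (1 - P) y⁆ ((1 - P) z) + B ⁅(1 - P) x, P y⁆ (P z) := by
  simp only [canonicalForm, LinearMap.add_apply, LinearMap.smul_apply, LinearMap.compr₂_apply,
    LinearMap.compl₁₂_apply, LinearMap.compl₂_apply, LieHom.coe_toLinearMap,
    LieModule.toEnd_apply_apply, smul_eq_mul]

theorem canonicalForm_one_sub (P : Module.End ℝ 𝔡) :
    canonicalForm B (1 - P) = canonicalForm B P := by
  ext x y z
  rw [canonicalForm_apply, canonicalForm_apply, sub_sub_cancel]
  ring

theorem canonicalForm_swap_right (hinv : ∀ x y z : 𝔡, B ⁅x, y⁆ z = B x ⁅y, z⁆)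
    (P : Module.End ℝ 𝔡) (x y z : 𝔡) : canonicalForm B P x z y = -canonicalForm B P x y z := by
  set Q := 1 - P
  rw [canonicalForm_apply, canonicalForm_apply, lie_form_swap_right hinv (P x) (P y),
    lie_form_swap_right hinv (Q x) (Q y), lie_form_swap_right hinv (P x) (Q y),
    lie_form_swap_right hinv (Q x) (P y)]
  ring

theorem canonicalForm_torsion (hinv : ∀ x y z : 𝔡, B ⁅x, y⁆ z = B x ⁅y, z⁆)
    (P : Module.End ℝ 𝔡) (x y z : 𝔡) :
    canonicalForm B P x y z - canonicalForm B P y x z + canonicalForm B P z x y = B ⁅x, y⁆ z := by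
  set Q := 1 - P
  have split : ∀ v, v = P v + Q v := fun v => by simp [Q]
  conv_rhs => rw [split x, split y, split z]
  simp only [canonicalForm_apply, lie_add, add_lie, map_add, LinearMap.add_apply]
  rw [lie_form_swap_left (P x) (P y), lie_form_swap_left (Q x) (Q y),
    lie_form_swap_left (Q x) (P y), lie_form_swap_left (P x) (Q y),
    lie_form_cycle hinv (P x) (P y) (P z), lie_form_cycle hinv (Q x) (Q y) (Q z),
    lie_form_cycle hinv (Q x) (Q y) (P z), lie_form_cycle hinv (P x) (P y) (Q z)]
  ring

variable [FiniteDimensional ℝ 𝔡]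

noncomputable def canonicalConnection (hB : B.Nondegenerate) (P : Module.End ℝ 𝔡) :
    𝔡 →ₗ[ℝ] 𝔡 →ₗ[ℝ] 𝔡 :=
  (canonicalForm B P).compr₂ (B.toDual hB).symm.toLinearMap

theorem canonicalConnection_apply (hB : B.Nondegenerate) (P : Module.End ℝ 𝔡) (x y z : 𝔡) :
    B (canonicalConnection hB P x y) z = canonicalForm B P x y z := by
  simp [canonicalConnection]

theorem eq_canonicalConnection_iff (hB : B.Nondegenerate) (P : Module.End ℝ 𝔡)
    (D : 𝔡 →ₗ[ℝ] 𝔡 →ₗ[ℝ] 𝔡) :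
    D = canonicalConnection hB P ↔ ∀ x y z, B (D x y) z = canonicalForm B P x y z := by
  refine ⟨fun h => h ▸ canonicalConnection_apply hB P, fun h => ?_⟩
  ext x y
  refine sub_eq_zero.1 (hB.1 _ fun z => ?_)
  rw [map_sub, LinearMap.sub_apply, h, canonicalConnection_apply, sub_self]

theorem canonicalConnection_one_sub (hB : B.Nondegenerate) (P : Module.End ℝ 𝔡) :
    canonicalConnection hB (1 - P) = canonicalConnection hB P := by
  rw [canonicalConnection, canonicalForm_one_sub, canonicalConnection]

theorem isConnection_canonicalConnection (hsymm : ∀ x y : 𝔡, B x y = B y x)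
    (hinv : ∀ x y z : 𝔡, B ⁅x, y⁆ z = B x ⁅y, z⁆) (hB : B.Nondegenerate) (P : Module.End ℝ 𝔡) :
    IsConnection B (canonicalConnection hB P) := fun x y z => by
  rw [hsymm y, canonicalConnection_apply, canonicalConnection_apply,
    canonicalForm_swap_right hinv, neg_add_cancel]

theorem canonicalConnection_torsion (hinv : ∀ x y z : 𝔡, B ⁅x, y⁆ z = B x ⁅y, z⁆)
    (hB : B.Nondegenerate) (P : Module.End ℝ 𝔡) (x y z : 𝔡) :
    B (canonicalConnection hB P x y - canonicalConnection hB P y x - ⁅x, y⁆) z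
      + B (canonicalConnection hB P z x) y = 0 := by
  simp only [map_sub, LinearMap.sub_apply, canonicalConnection_apply]
  rw [← canonicalForm_torsion hinv P x y z]
  ring

theorem apply_canonicalConnection_eq_self (hB : B.Nondegenerate) {P : Module.End ℝ 𝔡}
    (hP : IsIdempotentElem P) (hPB : LinearMap.IsSelfAdjoint B P) (x : 𝔡) {y : 𝔡}
    (hy : P y = y) : P (canonicalConnection hB P x y) = canonicalConnection hB P x y := by
  set Q := 1 - P
  have hQB : LinearMap.IsSelfAdjoint B Q := LinearMap.isAdjointPair_one.sub hPB
  have hQy : Q y = 0 := by simp [Q, hy]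
  have hPQ : ∀ z, P (Q z) = 0 := fun z => by
    rw [← Module.End.mul_apply, hP.mul_one_sub_self, LinearMap.zero_apply]
  have hQQ : ∀ z, Q (Q z) = Q z := fun z => by rw [← Module.End.mul_apply, hP.one_sub.eq]
  suffices Q (canonicalConnection hB P x y) = 0 by
    rw [eq_comm, ← sub_eq_zero]
    simpa [Q] using this
  refine hB.1 _ fun z => ?_
  rw [hQB, canonicalConnection_apply, canonicalForm_apply, hPQ, hQQ, hQy]
  simp

theorem apply_canonicalConnection_eq_zero (hB : B.Nondegenerate) {P : Module.End ℝ 𝔡}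
    (hP : IsIdempotentElem P) (hPB : LinearMap.IsSelfAdjoint B P) (x : 𝔡) {y : 𝔡}
    (hy : P y = 0) : P (canonicalConnection hB P x y) = 0 := by
  have := apply_canonicalConnection_eq_self hB hP.one_sub (LinearMap.isAdjointPair_one.sub hPB) x
    (y := y) (by simp [hy])
  simpa [canonicalConnection_one_sub] using this

theorem isSkewAdjoint_mul_canonicalConnection_flip_mul (hsymm : ∀ x y : 𝔡, B x y = B y x)
    (hinv : ∀ x y z : 𝔡, B ⁅x, y⁆ z = B x ⁅y, z⁆) (hB : B.Nondegenerate) {P : Module.End ℝ 𝔡}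
    (hP : IsIdempotentElem P) (hPB : LinearMap.IsSelfAdjoint B P) (y : 𝔡) :
    LinearMap.IsSkewAdjoint B (P * (canonicalConnection hB P).flip y * P) := by
  have hQP : ∀ u, (1 - P) (P u) = 0 := fun u => by
    rw [← Module.End.mul_apply, hP.one_sub_mul_self, LinearMap.zero_apply]
  have hPP : ∀ u, P (P u) = P u := fun u => by rw [← Module.End.mul_apply, hP.eq]
  have compress : ∀ u w, B ((P * (canonicalConnection hB P).flip y * P) u) w
      = 3⁻¹ * B ⁅P u, P y⁆ (P w) := fun u w => by
    simp only [Module.End.mul_apply, LinearMap.flip_apply]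
    rw [hPB, canonicalConnection_apply, canonicalForm_apply, hQP, hQP, hPP, hPP]
    simp
  intro u w
  rw [Pi.neg_apply, map_neg, hsymm u, compress, compress, lie_form_swap_outer hsymm hinv]
  ring

theorem trace_canonicalConnection_flip (hsymm : ∀ x y : 𝔡, B x y = B y x)
    (hinv : ∀ x y z : 𝔡, B ⁅x, y⁆ z = B x ⁅y, z⁆) (hB : B.Nondegenerate) {P : Module.End ℝ 𝔡}
    (hP : IsIdempotentElem P) (hPB : LinearMap.IsSelfAdjoint B P) (y : 𝔡) :
    LinearMap.trace ℝ 𝔡 ((canonicalConnection hB P).flip y) = 0 := by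
  rw [LinearMap.trace_eq_add_of_isIdempotentElem hP,
    LinearMap.BilinForm.trace_eq_zero_of_isSkewAdjoint hB
      (isSkewAdjoint_mul_canonicalConnection_flip_mul hsymm hinv hB hP hPB y),
    zero_add, ← canonicalConnection_one_sub hB P]
  exact LinearMap.BilinForm.trace_eq_zero_of_isSkewAdjoint hB
    (isSkewAdjoint_mul_canonicalConnection_flip_mul hsymm hinv hB hP.one_sub
      (LinearMap.isAdjointPair_one.sub hPB) y)

end CanonicalConnection

theorem forall_split_formula_iff_canonicalForm {𝔡 : Type*} [LieRing 𝔡] [LieAlgebra ℝ 𝔡]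
    (B : LinearMap.BilinForm ℝ 𝔡) {V W : Submodule ℝ 𝔡} (hc : IsCompl V W)
    (D : 𝔡 →ₗ[ℝ] 𝔡 →ₗ[ℝ] 𝔡) :
    (∀ x xp xm y yp ym z zp zm : 𝔡,
        xp ∈ V → xm ∈ W → x = xp + xm →
        yp ∈ V → ym ∈ W → y = yp + ym →
        zp ∈ V → zm ∈ W → z = zp + zm →
        B (D x y) z = (3 : ℝ)⁻¹ * B ⁅xp, yp⁆ zp + (3 : ℝ)⁻¹ * B ⁅xm, ym⁆ zm
          + B ⁅xp, ym⁆ zm + B ⁅xm, yp⁆ zp) ↔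
      ∀ x y z, B (D x y) z = canonicalForm B (V.projection W hc) x y z := by
  set P := V.projection W hc
  have hPV : ∀ v, P v ∈ V := Submodule.projection_apply_mem hc
  have hQW : ∀ v, (1 - P) v ∈ W := Submodule.sub_projection_mem hc
  have hsplit : ∀ v, v = P v + (1 - P) v := fun v => by simp
  have hP : ∀ vp vm, vp ∈ V → vm ∈ W → P (vp + vm) = vp := fun vp vm hvp hvm => by
    rw [map_add, Submodule.projection_apply_of_mem_left hc hvp,
      Submodule.projection_apply_of_mem_right hc hvm, add_zero]
  have hQ : ∀ vp vm, vp ∈ V → vm ∈ W → (1 - P) (vp + vm) = vm := fun vp vm hvp hvm => by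
    rw [LinearMap.sub_apply, Module.End.one_apply, hP vp vm hvp hvm, add_sub_cancel_left]
  constructor
  · intro h x y z
    rw [canonicalForm_apply]
    exact h x _ _ y _ _ z _ _ (hPV x) (hQW x) (hsplit x) (hPV y) (hQW y) (hsplit y)
      (hPV z) (hQW z) (hsplit z)
  · rintro h x xp xm y yp ym z zp zm hxp hxm rfl hyp hym rfl hzp hzm rfl
    rw [h, canonicalForm_apply, hP xp xm hxp hxm, hP yp ym hyp hym, hP zp zm hzp hzm,
      hQ xp xm hxp hxm, hQ yp ym hyp hym, hQ zp zm hzp hzm]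

/-- On a quadratic Lie algebra `𝔡` with a generalized metric `V₊`
(`V₋ = V₊^⊥`, `x = x₊ + x₋`), there is a unique connection `∇` with
`⟨∇ₓy,z⟩ = (1/3)⟨[x₊,y₊],z₊⟩ + (1/3)⟨[x₋,y₋],z₋⟩ + ⟨[x₊,y₋],z₋⟩ + ⟨[x₋,y₊],z₊⟩`,
and this `∇` preserves the splitting, is torsion-free and has vanishing divergence. -/
theorem canonical_connection_quadratic_lie
    {𝔡 : Type*} [LieRing 𝔡] [LieAlgebra ℝ 𝔡] [FiniteDimensional ℝ 𝔡]
    (B : 𝔡 →ₗ[ℝ] 𝔡 →ₗ[ℝ] ℝ)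
    (hsymm : ∀ x y : 𝔡, B x y = B y x)
    (hnondeg : ∀ x : 𝔡, (∀ y : 𝔡, B x y = 0) → x = 0)
    (hinv : ∀ x y z : 𝔡, B ⁅x, y⁆ z = B x ⁅y, z⁆)
    (Vp : Submodule ℝ 𝔡) (hVp : IsGenMetric B Vp) :
    (∃! D : 𝔡 →ₗ[ℝ] 𝔡 →ₗ[ℝ] 𝔡, IsConnection B D ∧
      (∀ x xp xm y yp ym z zp zm : 𝔡,
        xp ∈ Vp → xm ∈ LinearMap.BilinForm.orthogonal B Vp → x = xp + xm →
        yp ∈ Vp → ym ∈ LinearMap.BilinForm.orthogonal B Vp → y = yp + ym →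
        zp ∈ Vp → zm ∈ LinearMap.BilinForm.orthogonal B Vp → z = zp + zm →
        B (D x y) z = (3 : ℝ)⁻¹ * B ⁅xp, yp⁆ zp + (3 : ℝ)⁻¹ * B ⁅xm, ym⁆ zm
          + B ⁅xp, ym⁆ zm + B ⁅xm, yp⁆ zp)) ∧
    (∀ D : 𝔡 →ₗ[ℝ] 𝔡 →ₗ[ℝ] 𝔡, IsConnection B D →
      (∀ x xp xm y yp ym z zp zm : 𝔡,
        xp ∈ Vp → xm ∈ LinearMap.BilinForm.orthogonal B Vp → x = xp + xm →
        yp ∈ Vp → ym ∈ LinearMap.BilinForm.orthogonal B Vp → y = yp + ym →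
        zp ∈ Vp → zm ∈ LinearMap.BilinForm.orthogonal B Vp → z = zp + zm →
        B (D x y) z = (3 : ℝ)⁻¹ * B ⁅xp, yp⁆ zp + (3 : ℝ)⁻¹ * B ⁅xm, ym⁆ zm
          + B ⁅xp, ym⁆ zm + B ⁅xm, yp⁆ zp) →
      -- the connection preserves the splitting,
      (∀ x : 𝔡, ∀ y ∈ Vp, D x y ∈ Vp) ∧
      (∀ x : 𝔡, ∀ y ∈ LinearMap.BilinForm.orthogonal B Vp,
        D x y ∈ LinearMap.BilinForm.orthogonal B Vp) ∧
      -- it is torsion-free,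
      (∀ x y z : 𝔡, B (D x y - D y x - ⁅x, y⁆) z + B (D z x) y = 0) ∧
      -- and its divergence vanishes.
      (∀ y : 𝔡, LinearMap.trace ℝ 𝔡 (D.flip y) = 0)) := by
  have hB : B.Nondegenerate := ⟨hnondeg, fun y hy => hnondeg y fun x => (hsymm y x).trans (hy x)⟩
  have hrefl : B.IsRefl := fun x y h => (hsymm y x).trans h
  have hc := hVp.1.isCompl_orthogonal hrefl
  have hP := Submodule.isIdempotentElem_projection hc
  have hPB := LinearMap.BilinForm.isSelfAdjoint_projection_orthogonal hrefl hc
  simp only [forall_split_formula_iff_canonicalForm B hc, ← eq_canonicalConnection_iff hB]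
  refine ⟨⟨_, ⟨isConnection_canonicalConnection hsymm hinv hB _, rfl⟩, fun D hD => hD.2⟩, ?_⟩
  rintro D - rfl
  refine ⟨fun x y hy => ?_, fun x y hy => ?_, canonicalConnection_torsion hinv hB _,
    trace_canonicalConnection_flip hsymm hinv hB hP hPB⟩
  · rw [← Submodule.projection_eq_self_iff hc] at hy ⊢
    exact apply_canonicalConnection_eq_self hB hP hPB x hy
  · rw [← Submodule.projection_apply_eq_zero_iff hc] at hy ⊢
    exact apply_canonicalConnection_eq_zero hB hP hPB x hy
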